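/- Let 𝒳 be a finite field with q elements, 𝒴 a finite set, and (X,Y) a random vector with joint distribution P on 𝒳×𝒴. For every ε>0, every δ>0, and every positive integer t, there exists an integer m₀ such that for every m ≥ m₀, setting n = t·2^m, there exist a positive integer M, an encoder f : 𝒳ⁿ → Fin M, and a decoder g : Fin M × 𝒴ⁿ → 𝒳ⁿ such that H_q(X|Y) < (log M)/(n·log q) < H_q(X|Y) + δ and Pr[X^{1:n} ≠ g(f(X^{1:n}), Y^{1:n})] < ε, where (X^{1:n}, Y^{1:n}) denotes n i.i.d. copies of (X,Y). -/

import Mathlib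

open scoped BigOperators

/-- Shannon entropy (in nats) of a probability mass function on a finite type. -/
noncomputable def pmfEntropy {α : Type} [Fintype α] (Q : PMF α) : ℝ :=
  ∑ a, Real.negMulLog ((Q a).toReal)

open Classical in
/-- Probability of the event `E` under `n` i.i.d. copies of a distribution `P`
on a finite alphabet. -/
noncomputable def iidProb {α : Type} [Fintype α] (P : PMF α) (n : ℕ)
    (E : (Fin n → α) → Prop) : ℝ :=
  ∑ ω : Fin n → α, if E ω then ∏ i, (P (ω i)).toReal else 0

/-- Conditional entropy `H_q(X | Y)` (in base `q = |𝓧|`), computed as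
`(H(X, Y) - H(Y)) / log q` from the joint distribution `P` of `(X, Y)`. -/
noncomputable def condEntropyQ {𝓧 𝓨 : Type} [Fintype 𝓧] [Fintype 𝓨]
    (P : PMF (𝓧 × 𝓨)) : ℝ :=
  (pmfEntropy P - pmfEntropy (P.map Prod.snd)) / Real.log (Fintype.card 𝓧)

/-!
The information density `condInfo P (x, y) = -log P(x | y)` has mean `H = H(X | Y)` (in nats).
Encode `x ∈ 𝓧ⁿ` by a bin index `f x ∈ Fin M`, and decode a bin `b` with side information `y` by
any `x'` in bin `b` that is conditionally typical, `∏ P(x'ᵢ | yᵢ) ≥ e^{-R}` with `R = n (H + η)`;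
there are at most `e^R` such `x'`. A decoding error needs either an atypical sample, which by
Chebyshev's inequality has probability at most `Var (condInfo) / (n η²)`, or a second typical
sequence in the same bin, which for a uniformly random `f` has average probability at most
`e^R / M`; some `f` is no worse than the average. Taking `M = ⌈e^{n (H + 2η)}⌉` makes the rate
exceed `H_q(X | Y)` by less than `δ` and the error probability tend to `0` as `n → ∞`, in
particular along `n = t 2^m`.
-/

open Finset Filter Topology

lemma PMF.sum_toReal_eq_one {α : Type} [Fintype α] (P : PMF α) : ∑ a, (P a).toReal = 1 := by
  have h := P.tsum_coe
  rw [tsum_fintype] at h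
  rw [← ENNReal.toReal_sum fun a _ => P.apply_ne_top a, h, ENNReal.toReal_one]

section IID

variable {α : Type} [Fintype α] {n : ℕ}

lemma sum_prod_mul_prod {R : Type*} [CommSemiring R] (p : α → R) (g : Fin n → α → R) :
    ∑ ω : Fin n → α, (∏ k, p (ω k)) * ∏ k, g k (ω k) = ∏ k, ∑ a, p a * g k a := by
  classical
  simp_rw [Fintype.prod_sum, prod_mul_distrib]

variable (P : PMF α)

lemma sum_prod_toReal_eq_one : ∑ ω : Fin n → α, ∏ k, (P (ω k)).toReal = 1 := by
  simpa [P.sum_toReal_eq_one] using sum_prod_mul_prod (fun a => (P a).toReal) (fun _ _ => 1)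

lemma sum_prod_toReal_mul_mul (W : α → ℝ) (i j : Fin n) :
    ∑ ω : Fin n → α, (∏ k, (P (ω k)).toReal) * (W (ω i) * W (ω j)) =
      if i = j then ∑ a, (P a).toReal * W a ^ 2 else (∑ a, (P a).toReal * W a) ^ 2 := by
  classical
  let g : Fin n → α → ℝ := fun k a => (if k = i then W a else 1) * (if k = j then W a else 1)
  have hsplit (ω : Fin n → α) : W (ω i) * W (ω j) = ∏ k, g k (ω k) := by
    simp only [g, prod_mul_distrib, prod_ite_eq', mem_univ, if_true]
  simp_rw [hsplit]
  rw [sum_prod_mul_prod (fun a => (P a).toReal) g]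
  split_ifs with hij
  · subst hij
    rw [prod_eq_single i (fun k _ hk => by simp [g, hk, P.sum_toReal_eq_one]) (by simp)]
    simp [g, sq]
  · rw [prod_eq_mul i j hij (fun k _ hk => by simp [g, hk.1, hk.2, P.sum_toReal_eq_one])
      (by simp) (by simp)]
    simp [g, hij, Ne.symm hij, sq]

lemma sum_prod_toReal_mul_sum_sq (W : α → ℝ) (hW : ∑ a, (P a).toReal * W a = 0) :
    ∑ ω : Fin n → α, (∏ k, (P (ω k)).toReal) * (∑ i, W (ω i)) ^ 2 =
      n * ∑ a, (P a).toReal * W a ^ 2 := by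
  have hexpand (ω : Fin n → α) : (∏ k, (P (ω k)).toReal) * (∑ i, W (ω i)) ^ 2 =
      ∑ i, ∑ j, (∏ k, (P (ω k)).toReal) * (W (ω i) * W (ω j)) := by
    rw [sq, sum_mul_sum, mul_sum]
    exact sum_congr rfl fun i _ => mul_sum _ _ _
  rw [sum_congr rfl fun ω _ => hexpand ω, sum_comm, sum_congr rfl fun i _ => sum_comm]
  simp [sum_prod_toReal_mul_mul, hW]

lemma iidProb_mono {E F : (Fin n → α) → Prop}
    (h : ∀ ω, (∀ i, P (ω i) ≠ 0) → E ω → F ω) : iidProb P n E ≤ iidProb P n F := by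
  refine sum_le_sum fun ω _ => ?_
  by_cases hω : ∀ i, P (ω i) ≠ 0
  · by_cases hE : E ω
    · simp [hE, h ω hω hE]
    · simp only [hE, if_false]; split_ifs <;> positivity
  · obtain ⟨i, hi⟩ := not_forall_not.1 hω
    rw [prod_eq_zero (mem_univ i) (by simp [hi])]
    split_ifs <;> simp

lemma iidProb_or_le (E F : (Fin n → α) → Prop) :
    iidProb P n (fun ω => E ω ∨ F ω) ≤ iidProb P n E + iidProb P n F := by
  rw [iidProb, iidProb, iidProb, ← sum_add_distrib]
  refine sum_le_sum fun ω _ => ?_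
  have := prod_nonneg fun i (_ : i ∈ univ) => (P (ω i)).toReal_nonneg
  split_ifs <;> simp_all

lemma iidProb_lt_sum_le (W : α → ℝ) (hW : ∑ a, (P a).toReal * W a = 0) {c : ℝ} (hc : 0 < c) :
    iidProb P n (fun ω => c < ∑ i, W (ω i)) ≤ n * (∑ a, (P a).toReal * W a ^ 2) / c ^ 2 := by
  rw [← sum_prod_toReal_mul_sum_sq P W hW, sum_div, iidProb]
  refine sum_le_sum fun ω _ => ?_
  have := prod_nonneg fun i (_ : i ∈ univ) => (P (ω i)).toReal_nonneg
  split_ifs with h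
  · rw [le_div_iff₀ (by positivity)]
    exact mul_le_mul_of_nonneg_left (pow_le_pow_left₀ hc.le h.le 2) this
  · positivity

end IID

section Conditional

variable {𝓧 𝓨 : Type} (P : PMF (𝓧 × 𝓨))

-- Off the support of `P_Y` this is `0 / 0 = 0`, so `∑ x, condProb P (x, y) ≤ 1` for every `y`.
noncomputable def condProb (a : 𝓧 × 𝓨) : ℝ := (P a).toReal / (P.map Prod.snd a.2).toReal

noncomputable def condInfo (a : 𝓧 × 𝓨) : ℝ := -Real.log (condProb P a)

lemma condProb_nonneg (a : 𝓧 × 𝓨) : 0 ≤ condProb P a :=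
  div_nonneg ENNReal.toReal_nonneg ENNReal.toReal_nonneg

lemma map_snd_apply_ne_zero {a : 𝓧 × 𝓨} (ha : P a ≠ 0) : P.map Prod.snd a.2 ≠ 0 :=
  (PMF.mem_support_iff _ _).1 ((P.mem_support_map_iff _ _).2 ⟨a, ha, rfl⟩)

lemma condProb_pos {a : 𝓧 × 𝓨} (ha : P a ≠ 0) : 0 < condProb P a :=
  div_pos (ENNReal.toReal_pos ha (P.apply_ne_top a))
    (ENNReal.toReal_pos (map_snd_apply_ne_zero P ha) (PMF.apply_ne_top _ _))

variable [Fintype 𝓧]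

open Classical in
noncomputable def condTypicalSet (n : ℕ) (R : ℝ) (y : Fin n → 𝓨) : Finset (Fin n → 𝓧) :=
  {x | Real.exp (-R) ≤ ∏ i, condProb P (x i, y i)}

lemma mem_condTypicalSet {n : ℕ} {R : ℝ} {x : Fin n → 𝓧} {y : Fin n → 𝓨}
    (hx : ∀ i, P (x i, y i) ≠ 0) (hR : ∑ i, condInfo P (x i, y i) ≤ R) :
    x ∈ condTypicalSet P n R y := by
  have hprod : ∏ i, condProb P (x i, y i) = Real.exp (-∑ i, condInfo P (x i, y i)) := by
    simp_rw [← sum_neg_distrib, Real.exp_sum, condInfo, neg_neg,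
      Real.exp_log (condProb_pos P (hx _))]
  simp only [condTypicalSet, mem_filter, mem_univ, true_and, hprod]
  exact Real.exp_le_exp.2 (neg_le_neg hR)

variable [Fintype 𝓨]

lemma sum_toReal_apply_mk_eq_map_snd (y : 𝓨) :
    ∑ x, (P (x, y)).toReal = (P.map Prod.snd y).toReal := by
  classical
  rw [← ENNReal.toReal_sum fun x _ => P.apply_ne_top _, PMF.map_apply, tsum_fintype,
    Fintype.sum_prod_type]
  simp

lemma sum_condProb_le_one (y : 𝓨) : ∑ x, condProb P (x, y) ≤ 1 := by
  simp_rw [condProb, ← sum_div, sum_toReal_apply_mk_eq_map_snd]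
  exact div_self_le_one _

lemma condProb_le_one (a : 𝓧 × 𝓨) : condProb P a ≤ 1 :=
  (single_le_sum (fun x _ => condProb_nonneg P (x, a.2)) (mem_univ a.1)).trans
    (sum_condProb_le_one P a.2)

lemma pmfEntropy_sub_pmfEntropy_map_snd :
    pmfEntropy P - pmfEntropy (P.map Prod.snd) = ∑ a, (P a).toReal * condInfo P a := by
  have hY : pmfEntropy (P.map Prod.snd) =
      ∑ a : 𝓧 × 𝓨, -((P a).toReal * Real.log (P.map Prod.snd a.2).toReal) := by
    rw [pmfEntropy, Fintype.sum_prod_type_right]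
    refine sum_congr rfl fun y _ => ?_
    dsimp only
    rw [sum_neg_distrib, ← sum_mul, sum_toReal_apply_mk_eq_map_snd, Real.negMulLog, neg_mul]
  rw [pmfEntropy, hY, ← sum_sub_distrib]
  refine sum_congr rfl fun a _ => ?_
  by_cases ha : P a = 0
  · simp [ha]
  · rw [condInfo, condProb, Real.log_div (ENNReal.toReal_ne_zero.2 ⟨ha, P.apply_ne_top a⟩)
      (ENNReal.toReal_ne_zero.2 ⟨map_snd_apply_ne_zero P ha, PMF.apply_ne_top _ _⟩),
      Real.negMulLog]
    ring

lemma card_condTypicalSet_le (n : ℕ) (R : ℝ) (y : Fin n → 𝓨) :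
    (#(condTypicalSet P n R y) : ℝ) ≤ Real.exp R := by
  classical
  have htotal : ∑ x : Fin n → 𝓧, ∏ i, condProb P (x i, y i) ≤ 1 := by
    rw [← Fintype.prod_sum (fun i x => condProb P (x, y i))]
    exact prod_le_one (fun i _ => sum_nonneg fun x _ => condProb_nonneg P _)
      fun i _ => sum_condProb_le_one P (y i)
  have hcard : #(condTypicalSet P n R y) • Real.exp (-R) ≤ 1 :=
    (card_nsmul_le_sum _ _ _ fun x hx => (mem_filter.1 hx).2).trans
      ((sum_le_sum_of_subset_of_nonneg (subset_univ _) fun x _ _ =>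
        prod_nonneg fun i _ => condProb_nonneg P _).trans htotal)
  rwa [nsmul_eq_mul, Real.exp_neg, ← div_eq_mul_inv, div_le_one (Real.exp_pos R)] at hcard

end Conditional

section Binning

variable {β γ : Type}

lemma card_filter_apply_eq_apply_mul_card [Fintype β] [DecidableEq β] [Fintype γ] [DecidableEq γ]
    {x x' : β} (hne : x' ≠ x) :
    #{f : β → γ | f x' = f x} * Fintype.card γ = Fintype.card (β → γ) := by
  let e := Equiv.funSplitAt x' γ
  have hcard : #{f : β → γ | f x' = f x} = Fintype.card ({j // j ≠ x'} → γ) := by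
    rw [card_filter, ← e.symm.sum_comp, Fintype.sum_prod_type_right]
    simp [e, Equiv.funSplitAt_symm_apply, hne.symm]
  rw [hcard, Fintype.card_congr e, Fintype.card_prod, mul_comm]

lemma card_filter_exists_collision_mul_card_le [Fintype β] [DecidableEq β] [Fintype γ]
    [DecidableEq γ] (S : Finset β) (x : β) :
    #{f : β → γ | ∃ x' ∈ S, x' ≠ x ∧ f x' = f x} * Fintype.card γ ≤
      #S * Fintype.card (β → γ) := by
  have hsub : ({f : β → γ | ∃ x' ∈ S, x' ≠ x ∧ f x' = f x} : Finset (β → γ)) ⊆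
      (S.erase x).biUnion fun x' => {f : β → γ | f x' = f x} := by
    intro f
    simp only [mem_filter, mem_univ, true_and, mem_biUnion, mem_erase]
    exact fun ⟨x', hS, hne, heq⟩ => ⟨x', ⟨hne, hS⟩, heq⟩
  calc _ ≤ (∑ x' ∈ S.erase x, #{f : β → γ | f x' = f x}) * Fintype.card γ :=
        Nat.mul_le_mul_right _ ((card_le_card hsub).trans card_biUnion_le)
    _ = #(S.erase x) * Fintype.card (β → γ) := by
        rw [sum_mul, sum_const_nat fun x' hx' =>
          card_filter_apply_eq_apply_mul_card (ne_of_mem_erase hx')]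
    _ ≤ #S * Fintype.card (β → γ) := Nat.mul_le_mul_right _ (card_erase_le)

lemma exists_iidProb_collision_le [Fintype β] {α : Type} [Fintype α] (P : PMF α) {n M : ℕ}
    (hM : 0 < M) (x : (Fin n → α) → β) (S : (Fin n → α) → Finset β) {K : ℝ}
    (hS : ∀ ω, (#(S ω) : ℝ) ≤ K) :
    ∃ f : β → Fin M, iidProb P n (fun ω => ∃ x' ∈ S ω, x' ≠ x ω ∧ f x' = f (x ω)) ≤ K / M := by
  classical
  have : NeZero M := ⟨hM.ne'⟩
  have hcount (ω : Fin n → α) :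
      (#{f : β → Fin M | ∃ x' ∈ S ω, x' ≠ x ω ∧ f x' = f (x ω)} : ℝ) ≤
        Fintype.card (β → Fin M) * (K / M) := by
    have h := card_filter_exists_collision_mul_card_le (γ := Fin M) (S ω) (x ω)
    rw [Fintype.card_fin] at h
    rw [mul_div_assoc', le_div_iff₀ (by positivity)]
    calc _ ≤ (#(S ω) * Fintype.card (β → Fin M) : ℝ) := by exact_mod_cast h
      _ ≤ _ := by rw [mul_comm]; gcongr; exact hS ω
  have havg : ∑ f : β → Fin M, iidProb P n (fun ω => ∃ x' ∈ S ω, x' ≠ x ω ∧ f x' = f (x ω)) ≤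
      ∑ _f : β → Fin M, K / M := by
    rw [sum_const, card_univ, nsmul_eq_mul]
    unfold iidProb
    rw [sum_comm]
    calc _ = ∑ ω : Fin n → α, #{f : β → Fin M | ∃ x' ∈ S ω, x' ≠ x ω ∧ f x' = f (x ω)} *
          ∏ i, (P (ω i)).toReal := by
          refine sum_congr rfl fun ω _ => ?_
          rw [card_filter, Nat.cast_sum, sum_mul]
          refine sum_congr rfl fun f _ => ?_
          split_ifs <;> simp
      _ ≤ ∑ ω : Fin n → α, Fintype.card (β → Fin M) * (K / M) * ∏ i, (P (ω i)).toReal := by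
          gcongr with ω
          exact hcount ω
      _ = Fintype.card (β → Fin M) * (K / M) := by
          rw [← mul_sum, sum_prod_toReal_eq_one, mul_one]
  obtain ⟨f, -, hf⟩ := exists_le_of_sum_le univ_nonempty havg
  exact ⟨f, hf⟩

noncomputable def binDecoder {Y : Type} [Nonempty β] (T : Y → Finset β) (f : β → γ) (b : γ × Y) :
    β :=
  Classical.epsilon fun x => x ∈ T b.2 ∧ f x = b.1

lemma binDecoder_eq_or_exists_collision {Y : Type} [Nonempty β] {T : Y → Finset β} {f : β → γ}
    {x : β} {y : Y} (hx : x ∈ T y) :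
    binDecoder T f (f x, y) = x ∨ ∃ x' ∈ T y, x' ≠ x ∧ f x' = f x := by
  have h := Classical.epsilon_spec (p := fun x' => x' ∈ T y ∧ f x' = f x) ⟨x, hx, rfl⟩
  exact or_iff_not_imp_left.2 fun hne => ⟨_, h.1, hne, h.2⟩

end Binning

lemma le_log_natCeil_exp (x : ℝ) : x ≤ Real.log ⌈Real.exp x⌉₊ :=
  (Real.le_log_iff_exp_le (Nat.cast_pos.2 (Nat.ceil_pos.2 (Real.exp_pos x)))).2 (Nat.le_ceil _)

lemma log_natCeil_exp_lt {x : ℝ} (hx : 0 ≤ x) : Real.log ⌈Real.exp x⌉₊ < x + Real.log 2 := by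
  have h1 : 1 ≤ Real.exp x := Real.one_le_exp hx
  rw [← Real.log_exp x, ← Real.log_mul (Real.exp_pos x).ne' two_ne_zero, Real.log_exp]
  refine Real.log_lt_log (Nat.cast_pos.2 (Nat.ceil_pos.2 (Real.exp_pos x))) ?_
  linarith [Nat.ceil_lt_add_one (Real.exp_pos x).le]

section Coding

variable {𝓧 𝓨 : Type} [Fintype 𝓧] [Fintype 𝓨] (P : PMF (𝓧 × 𝓨))

noncomputable def condEntropy : ℝ := ∑ a, (P a).toReal * condInfo P a

noncomputable def condInfoVariance : ℝ := ∑ a, (P a).toReal * (condInfo P a - condEntropy P) ^ 2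

lemma condEntropyQ_eq : condEntropyQ P = condEntropy P / Real.log (Fintype.card 𝓧) := by
  rw [condEntropyQ, pmfEntropy_sub_pmfEntropy_map_snd, condEntropy]

lemma condEntropy_nonneg : 0 ≤ condEntropy P :=
  sum_nonneg fun a _ => mul_nonneg ENNReal.toReal_nonneg
    (neg_nonneg.2 (Real.log_nonpos (condProb_nonneg P a) (condProb_le_one P a)))

theorem exists_code_iidProb_error_le [Nonempty 𝓧] {n M : ℕ} (hn : 0 < n) (hM : 0 < M) {η : ℝ}
    (hη : 0 < η) :
    ∃ (f : (Fin n → 𝓧) → Fin M) (g : Fin M × (Fin n → 𝓨) → (Fin n → 𝓧)),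
      iidProb P n (fun ω => (fun i => (ω i).1) ≠ g (f (fun i => (ω i).1), fun i => (ω i).2)) ≤
        condInfoVariance P / (n * η ^ 2) + Real.exp (n * (condEntropy P + η)) / M := by
  classical
  set R := n * (condEntropy P + η)
  obtain ⟨f, hf⟩ := exists_iidProb_collision_le P hM (fun ω i => (ω i).1)
    (fun ω => condTypicalSet P n R fun i => (ω i).2) fun ω => card_condTypicalSet_le P n R _
  refine ⟨f, binDecoder (condTypicalSet P n R) f, ?_⟩
  have hmean : ∑ a, (P a).toReal * (condInfo P a - condEntropy P) = 0 := by
    simp_rw [mul_sub, sum_sub_distrib, ← sum_mul, P.sum_toReal_eq_one, one_mul, condEntropy,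
      sub_self]
  have hatyp := iidProb_lt_sum_le P (n := n) _ hmean (c := n * η) (by positivity)
  calc _ ≤ iidProb P n (fun ω => n * η < ∑ i, (condInfo P (ω i) - condEntropy P)) +
        iidProb P n (fun ω => ∃ x' ∈ condTypicalSet P n R (fun i => (ω i).2),
          x' ≠ (fun i => (ω i).1) ∧ f x' = f (fun i => (ω i).1)) := by
        refine (iidProb_mono P fun ω hω herr => ?_).trans (iidProb_or_le P _ _)
        refine or_iff_not_imp_left.2 fun htyp => ?_
        have hR : ∑ i, condInfo P ((ω i).1, (ω i).2) ≤ R := by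
          rw [sum_sub_distrib, sum_const, card_univ, Fintype.card_fin, nsmul_eq_mul] at htyp
          simp only [R]
          linarith
        exact (binDecoder_eq_or_exists_collision (mem_condTypicalSet P hω hR)).resolve_left
          (Ne.symm herr)
    _ ≤ n * condInfoVariance P / (n * η) ^ 2 + Real.exp R / M := add_le_add hatyp hf
    _ = condInfoVariance P / (n * η ^ 2) + Real.exp R / M := by
        field_simp

theorem eventually_exists_code [Nontrivial 𝓧] {ε δ : ℝ} (hε : 0 < ε) (hδ : 0 < δ) :
    ∀ᶠ n in atTop, ∃ (M : ℕ) (f : (Fin n → 𝓧) → Fin M) (g : Fin M × (Fin n → 𝓨) → (Fin n → 𝓧)),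
      0 < M ∧
      condEntropyQ P < Real.log M / (n * Real.log (Fintype.card 𝓧)) ∧
      Real.log M / (n * Real.log (Fintype.card 𝓧)) < condEntropyQ P + δ ∧
      iidProb P n (fun ω => (fun i => (ω i).1) ≠ g (f (fun i => (ω i).1), fun i => (ω i).2))
        < ε := by
  set L := Real.log (Fintype.card 𝓧)
  have hL : 0 < L := Real.log_pos (by exact_mod_cast Fintype.one_lt_card)
  set η := δ * L / 4
  have hη : 0 < η := by positivity
  have hgap : ∀ᶠ n : ℕ in atTop, Real.log 2 < n * η :=
    (tendsto_natCast_atTop_atTop.atTop_mul_const hη).eventually_gt_atTop _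
  have herr : Tendsto (fun n : ℕ => condInfoVariance P / (n * η ^ 2) + Real.exp (-(n * η)))
      atTop (𝓝 0) := by
    have hvar : Tendsto (fun n : ℕ => condInfoVariance P / (n * η ^ 2)) atTop (𝓝 0) :=
      (tendsto_const_div_atTop_nhds_zero_nat _).congr fun n => by rw [div_div, mul_comm]
    simpa using hvar.add
      (Real.tendsto_exp_neg_atTop_nhds_zero.comp (tendsto_natCast_atTop_atTop.atTop_mul_const hη))
  filter_upwards [eventually_gt_atTop 0, hgap, herr.eventually (gt_mem_nhds hε)]
    with n hn hgap herr
  have hnR : (0 : ℝ) < n := Nat.cast_pos.2 hn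
  set M := ⌈Real.exp (n * (condEntropy P + 2 * η))⌉₊
  have hM : 0 < M := Nat.ceil_pos.2 (Real.exp_pos _)
  have hlogM_ge := le_log_natCeil_exp (n * (condEntropy P + 2 * η))
  have hlogM_lt := log_natCeil_exp_lt (x := n * (condEntropy P + 2 * η))
    (by have := condEntropy_nonneg P; positivity)
  obtain ⟨f, g, hfg⟩ := exists_code_iidProb_error_le P hn hM hη
  refine ⟨M, f, g, hM, ?_, ?_, hfg.trans_lt ?_⟩
  · have hH : n * condEntropy P < Real.log M := by nlinarith
    rw [condEntropyQ_eq, div_lt_div_iff₀ hL (by positivity)]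
    nlinarith
  · rw [condEntropyQ_eq, div_lt_iff₀ (by positivity)]
    have hrate : (condEntropy P / L + δ) * (n * L) = n * condEntropy P + 4 * (n * η) := by
      field_simp; ring
    rw [hrate]
    nlinarith
  · have hcoll : Real.exp (n * (condEntropy P + η)) / M ≤ Real.exp (-(n * η)) := by
      rw [div_le_iff₀ (by positivity)]
      calc Real.exp (n * (condEntropy P + η))
          = Real.exp (-(n * η)) * Real.exp (n * (condEntropy P + 2 * η)) := by
            rw [← Real.exp_add]; ring_nf
        _ ≤ Real.exp (-(n * η)) * M := by gcongr; exact Nat.le_ceil _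
    linarith

end Coding

theorem source_coding_with_side_information_single_decoder
    {𝓧 : Type} [Field 𝓧] [Fintype 𝓧] {𝓨 : Type} [Fintype 𝓨]
    (P : PMF (𝓧 × 𝓨)) {ε δ : ℝ} (hε : 0 < ε) (hδ : 0 < δ)
    (t : ℕ) (ht : 0 < t) :
    ∃ m₀ : ℕ, ∀ m : ℕ, m₀ ≤ m →
      ∃ (M : ℕ) (f : (Fin (t * 2 ^ m) → 𝓧) → Fin M)
        (g : Fin M × (Fin (t * 2 ^ m) → 𝓨) → (Fin (t * 2 ^ m) → 𝓧)),
        0 < M ∧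
        condEntropyQ P < Real.log M / ((t * 2 ^ m : ℕ) * Real.log (Fintype.card 𝓧)) ∧
        Real.log M / ((t * 2 ^ m : ℕ) * Real.log (Fintype.card 𝓧)) < condEntropyQ P + δ ∧
        iidProb P (t * 2 ^ m)
          (fun ω => (fun i => (ω i).1)
            ≠ g (f (fun i => (ω i).1), fun i => (ω i).2)) < ε := by
  have hlen : Tendsto (fun m => t * 2 ^ m) atTop atTop :=
    tendsto_atTop_mono (fun m => Nat.le_mul_of_pos_left _ ht)
      (tendsto_pow_atTop_atTop_of_one_lt one_lt_two)
  exact eventually_atTop.1 (hlen.eventually (eventually_exists_code P hε hδ))
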